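/- arXiv:1501.06037 — 2 statements merged into one kernel-verified Lean document; each statement's English description precedes it below -/
import Mathlib

section
/- If Γ ⊂ ℝ^{n+1} is an open convex symmetric cone with vertex at the origin containing the positive cone Γ⁺, then Γ is contained in the half-space {λ ∈ ℝ^{n+1} : λ₁ + ⋯ + λ_{n+1} > 0} whenever Γ is a proper subcone (Γ ≠ ℝ^{n+1}). -/
/-- An open convex symmetric cone `Γ ⊂ ℝ^{n+1}` with vertex at the origin
containing the positive cone `Γ⁺` is contained in the half-space
`{λ : λ₁ + ⋯ + λ_{n+1} > 0}` whenever `Γ` is proper (`Γ ≠ ℝ^{n+1}`). -/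
theorem stmt0 (n : ℕ) (Γ : Set (Fin (n + 1) → ℝ))
    (hopen : IsOpen Γ) (hconv : Convex ℝ Γ)
    (hcone : ∀ t : ℝ, 0 < t → ∀ lam ∈ Γ, t • lam ∈ Γ)
    (hsym : ∀ σ : Equiv.Perm (Fin (n + 1)), ∀ lam ∈ Γ, lam ∘ σ ∈ Γ)
    (hpos : {lam : Fin (n + 1) → ℝ | ∀ ℓ, 0 < lam ℓ} ⊆ Γ)
    (hproper : Γ ≠ Set.univ) :
    Γ ⊆ {lam : Fin (n + 1) → ℝ | 0 < ∑ ℓ, lam ℓ} := by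
  intro lam hlam
  by_contra hle
  simp only [Set.mem_setOf_eq, not_lt] at hle
  -- the average over cyclic shifts, a constant vector, lies in Γ
  set c : ℝ := (∑ ℓ, lam ℓ) / (n + 1) with hc
  have hN : (0:ℝ) < (n + 1 : ℝ) := by positivity
  have hvmem : (fun _ : Fin (n+1) => c) ∈ Γ := by
    have h := hconv.sum_mem (t := (Finset.univ : Finset (Fin (n+1))))
      (w := fun _ => ((n+1 : ℝ))⁻¹)
      (z := fun k => lam ∘ (Equiv.addLeft k))
      (fun i _ => by positivity)
      (by
        simp [Finset.sum_const, Finset.card_univ]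
        field_simp)
      (fun k _ => hsym _ lam hlam)
    have heq : (∑ k : Fin (n+1), ((n+1:ℝ))⁻¹ • (lam ∘ (Equiv.addLeft k)))
        = (fun _ : Fin (n+1) => c) := by
      funext i
      have : (∑ k : Fin (n+1), ((n+1:ℝ))⁻¹ • (lam ∘ (Equiv.addLeft k))) i
          = ∑ k : Fin (n+1), ((n+1:ℝ))⁻¹ * lam (k + i) := by
        simp [Finset.sum_apply]
      rw [this, ← Finset.mul_sum]
      have hsum : ∑ k : Fin (n+1), lam (k + i) = ∑ j, lam j :=
        Fintype.sum_equiv (Equiv.addRight i) (fun k => lam (k + i)) lam (fun k => rfl)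
      rw [hsum, hc]
      field_simp
    rw [heq] at h
    exact h
  have hcle : c ≤ 0 := div_nonpos_of_nonpos_of_nonneg hle hN.le
  -- some strictly negative constant vector lies in Γ
  obtain ⟨d, hd, hdmem⟩ : ∃ d : ℝ, d < 0 ∧ (fun _ : Fin (n+1) => d) ∈ Γ := by
    rcases lt_or_eq_of_le hcle with h | h
    · exact ⟨c, h, hvmem⟩
    · rw [h] at hvmem
      rw [Metric.isOpen_iff] at hopen
      obtain ⟨ε, hε, hball⟩ := hopen _ hvmem
      refine ⟨-(ε/2), by linarith, hball ?_⟩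
      rw [Metric.mem_ball, dist_pi_lt_iff hε]
      intro b
      simp [Real.dist_eq, abs_of_pos hε]
      linarith
  -- every negative constant vector lies in Γ
  have hneg : ∀ M : ℝ, 0 < M → (fun _ : Fin (n+1) => -M) ∈ Γ := by
    intro M hM
    have ht : 0 < M / (-d) := div_pos hM (by linarith)
    have := hcone _ ht _ hdmem
    convert this using 1
    funext i
    simp only [Pi.smul_apply, smul_eq_mul]
    have hd0 : d ≠ 0 := ne_of_lt hd
    rw [div_neg, neg_mul, div_mul_cancel₀ _ hd0]
  -- hence Γ is everything, contradiction
  apply hproper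
  ext x
  simp only [Set.mem_univ, iff_true]
  set M : ℝ := 1 + ∑ ℓ, |x ℓ| with hM
  have hMpos : 0 < M := by
    have : (0:ℝ) ≤ ∑ ℓ, |x ℓ| := Finset.sum_nonneg fun i _ => abs_nonneg _
    linarith
  have hxM : (fun ℓ => x ℓ + M) ∈ Γ := by
    apply hpos
    intro ℓ
    have h1 : |x ℓ| ≤ ∑ j, |x j| :=
      Finset.single_le_sum (f := fun j => |x j|) (fun i _ => abs_nonneg _) (Finset.mem_univ ℓ)
    have h2 : -x ℓ ≤ |x ℓ| := neg_le_abs _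
    simp only [Set.mem_setOf_eq]
    rw [hM]; linarith
  have hmid : (2:ℝ)⁻¹ • x ∈ Γ := by
    have h := hconv hxM (hneg M hMpos) (a := (2:ℝ)⁻¹) (b := (2:ℝ)⁻¹)
      (by norm_num) (by norm_num) (by norm_num)
    convert h using 1
    funext i
    simp only [Pi.smul_apply, Pi.add_apply, smul_eq_mul]
    ring
  have := hcone 2 (by norm_num) _ hmid
  rw [smul_smul] at this
  norm_num at this
  exact this
end

section
/- Suppose f : Γ → ℝ is differentiable concave with f_ℓ > 0, Γ ⊂ ℝ^{n+1} an open convex cone containing 𝟏, f(𝟏) > 0, and f satisfies the condition ∑_{ℓ=1}^{n+1} f_ℓ(λ) λ_ℓ ≥ −K₀(1 + ∑_{ℓ=1}^{n+1} f_ℓ(λ)) for all λ ∈ Γ and some constant K₀ ≥ 0. Write λ = (λ₁,…,λ_n, λ_{n+1}) and f_τ = f_{n+1}. Then for any index 1 ≤ r ≤ n and any ε > 0, ∑_{i=1}^{n} f_i(λ)|λ_i| ≤ ε ∑_{i ≠ r, i ≤ n} f_i(λ) λ_i² + C(1 + ∑_{i=1}^{n} f_i(λ) + f_τ(λ)), where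 C depends only on ε, K₀, |λ_{n+1}|, and an upper bound for f(λ). -/
/-!
Write `f_ℓ` for the partial derivatives of `f` at `λ`. Concavity, compared against the point `𝟏`,
bounds `∑ f_ℓ λ_ℓ` above by `f(λ) - f(𝟏) + ∑ f_ℓ`, and the structural condition bounds it below
by `-K₀ (1 + ∑ f_ℓ)`. Isolating the `r`-th term in this sum controls `f_r |λ_r|` by these bounds,
by `f_τ |λ_{n+1}|` and by `∑_{i ≠ r} f_i |λ_i|`; the latter terms are then absorbed through
`2 |λ_i| ≤ ε λ_i² + ε⁻¹`.
-/

open Finset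

theorem ConcaveOn.le_add_fderiv {E : Type*} [NormedAddCommGroup E] [NormedSpace ℝ E]
    {s : Set E} {f : E → ℝ} (hf : ConcaveOn ℝ s f) {a b : E} (ha : a ∈ s) (hb : b ∈ s)
    (hd : DifferentiableAt ℝ f a) :
    f b ≤ f a + fderiv ℝ f a (b - a) := by
  have hline : HasDerivAt (f ∘ AffineMap.lineMap (k := ℝ) a b) (fderiv ℝ f a (b - a)) 0 :=
    hd.hasFDerivAt.comp_hasDerivAt_of_eq 0 AffineMap.hasDerivAt_lineMap (by simp)
  have hslope := (hf.comp_affineMap (AffineMap.lineMap a b)).slope_le_of_hasDerivAt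
    (by simpa using ha) (by simpa using hb) zero_lt_one hline
  rw [slope_def_field] at hslope
  simp only [Function.comp_apply, AffineMap.lineMap_apply_one, AffineMap.lineMap_apply_zero,
    sub_zero, div_one] at hslope
  linarith

theorem ContinuousLinearMap.apply_eq_sum_mul {ι : Type*} [Fintype ι] [DecidableEq ι]
    (L : (ι → ℝ) →L[ℝ] ℝ) (v : ι → ℝ) :
    L v = ∑ i, L (Pi.single i 1) * v i := by
  conv_lhs => rw [pi_eq_sum_univ' v]
  simp only [map_sum, map_smul, smul_eq_mul, mul_comm]

theorem ConcaveOn.sum_fderiv_single_mul_le {ι : Type*} [Fintype ι] [DecidableEq ι]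
    {s : Set (ι → ℝ)} {f : (ι → ℝ) → ℝ} (hf : ConcaveOn ℝ s f) {x : ι → ℝ} (hx : x ∈ s)
    (h1 : (fun _ => 1) ∈ s) (hd : DifferentiableAt ℝ f x) :
    ∑ i, fderiv ℝ f x (Pi.single i 1) * x i ≤
      f x - f (fun _ => 1) + ∑ i, fderiv ℝ f x (Pi.single i 1) := by
  have := hf.le_add_fderiv hx h1 hd
  simp only [ContinuousLinearMap.apply_eq_sum_mul _ (_ - x), Pi.sub_apply, mul_sub, mul_one,
    sum_sub_distrib] at this
  linarith

theorem two_mul_le_mul_sq_add_inv {ε : ℝ} (hε : 0 < ε) (y : ℝ) :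
    2 * y ≤ ε * y ^ 2 + ε⁻¹ := by
  have : ε * y ^ 2 + ε⁻¹ - 2 * y = (ε * y - 1) ^ 2 / ε := by
    field_simp
    ring
  nlinarith [div_nonneg (sq_nonneg (ε * y - 1)) hε.le]

theorem sum_mul_abs_le_abs_sum_add {ι : Type*} [Fintype ι] [DecidableEq ι] {a : ι → ℝ}
    (ha : ∀ i, 0 ≤ a i) (x : ι → ℝ) (r : ι) {ε : ℝ} (hε : 0 < ε) :
    ∑ i, a i * |x i| ≤
      |∑ i, a i * x i| + ε * ∑ i ∈ univ.filter (fun i => i ≠ r), a i * x i ^ 2 +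
        ε⁻¹ * ∑ i, a i := by
  rw [filter_ne' univ r]
  set R := univ.erase r
  have habs : ∀ s : Finset ι, |∑ i ∈ s, a i * x i| ≤ ∑ i ∈ s, a i * |x i| := fun s =>
    (abs_sum_le_sum_abs _ _).trans_eq
      (sum_congr rfl fun i _ => by rw [abs_mul, abs_of_nonneg (ha i)])
  have hr : a r * |x r| ≤ |∑ i, a i * x i| + ∑ i ∈ R, a i * |x i| := by
    have hsplit : a r * x r = ∑ i, a i * x i - ∑ i ∈ R, a i * x i := by
      rw [← add_sum_erase univ _ (mem_univ r)]
      ring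
    rw [← abs_of_nonneg (ha r), ← abs_mul, hsplit]
    exact (abs_sub _ _).trans (add_le_add_right (habs R) _)
  have hamgm : 2 * ∑ i ∈ R, a i * |x i| ≤
      ε * ∑ i ∈ R, a i * x i ^ 2 + ε⁻¹ * ∑ i ∈ R, a i := by
    simp only [mul_sum, ← sum_add_distrib]
    refine sum_le_sum fun i _ => ?_
    have := mul_le_mul_of_nonneg_left (two_mul_le_mul_sq_add_inv hε |x i|) (ha i)
    rw [sq_abs] at this
    linarith
  have hsub : ∑ i ∈ R, a i ≤ ∑ i, a i :=
    sum_le_sum_of_subset_of_nonneg (subset_univ R) fun i _ _ => ha i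
  rw [← add_sum_erase univ _ (mem_univ r)]
  linarith [mul_le_mul_of_nonneg_left hsub (inv_nonneg.2 hε.le)]

theorem stmt5_general (n : ℕ) (Γ : Set (Fin (n + 1) → ℝ)) (f : (Fin (n + 1) → ℝ) → ℝ)
    (hone : (fun _ : Fin (n + 1) => (1 : ℝ)) ∈ Γ)
    (hdiff : ∀ lam ∈ Γ, DifferentiableAt ℝ f lam)
    (hconc : ConcaveOn ℝ Γ f)
    (hmono : ∀ lam ∈ Γ, ∀ ℓ, 0 < fderiv ℝ f lam (Pi.single ℓ 1))
    (hf1 : 0 < f (fun _ => (1 : ℝ)))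
    (K₀ : ℝ) (hK₀ : 0 ≤ K₀)
    (hK : ∀ lam ∈ Γ, -K₀ * (1 + ∑ ℓ, fderiv ℝ f lam (Pi.single ℓ 1)) ≤
      ∑ ℓ, fderiv ℝ f lam (Pi.single ℓ 1) * lam ℓ)
    (ε B : ℝ) (hε : 0 < ε) (hB : 0 ≤ B) :
    ∃ C : ℝ, 0 < C ∧ ∀ lam ∈ Γ, |lam (Fin.last n)| ≤ B → f lam ≤ B → ∀ r : Fin n,
      ∑ i : Fin n, fderiv ℝ f lam (Pi.single i.castSucc 1) * |lam i.castSucc| ≤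
        ε * ∑ i ∈ Finset.univ.filter (fun i : Fin n => i ≠ r),
            fderiv ℝ f lam (Pi.single i.castSucc 1) * lam i.castSucc ^ 2 +
          C * (1 + ∑ i : Fin n, fderiv ℝ f lam (Pi.single i.castSucc 1) +
            fderiv ℝ f lam (Pi.single (Fin.last n) 1)) := by
  refine ⟨ε⁻¹ + K₀ + B + 1, by positivity, fun lam hlam hlast hfB r => ?_⟩
  have hupper := hconc.sum_fderiv_single_mul_le hlam hone (hdiff lam hlam)
  have hlower := hK lam hlam
  have hF : ∀ ℓ, 0 < fderiv ℝ f lam (Pi.single ℓ 1) := hmono lam hlam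
  have hmain := sum_mul_abs_le_abs_sum_add (fun i : Fin n => (hF i.castSucc).le)
    (fun i => lam i.castSucc) r hε
  simp only [Fin.sum_univ_castSucc] at hupper hlower
  set Sn := ∑ i : Fin n, fderiv ℝ f lam (Pi.single i.castSucc 1)
  set T := ∑ i : Fin n, fderiv ℝ f lam (Pi.single i.castSucc 1) * lam i.castSucc
  set Fτ := fderiv ℝ f lam (Pi.single (Fin.last n) 1)
  have hFτ : 0 < Fτ := hF _
  have hSn : 0 ≤ Sn := sum_nonneg fun i _ => (hF _).le
  have hτ : |Fτ * lam (Fin.last n)| ≤ B * Fτ := by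
    rw [abs_mul, abs_of_pos hFτ, mul_comm]
    exact mul_le_mul_of_nonneg_right hlast hFτ.le
  have hT : |T| ≤ B + K₀ + (1 + K₀) * (Sn + Fτ) + B * Fτ := by
    have := abs_le.1 hτ
    rw [abs_le]
    constructor <;> linarith [mul_nonneg hK₀ hSn, mul_nonneg hK₀ hFτ.le]
  linarith [mul_nonneg hB hSn, mul_nonneg (inv_nonneg.2 hε.le) hFτ.le, inv_pos.2 hε]

/-- Proposition 2.4 of the paper: under concavity, positivity of the partials
and the lower bound `∑ f_ℓ(λ) λ_ℓ ≥ −K₀(1 + ∑ f_ℓ(λ))`, for any `ε > 0` and any bound `B`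
on `|λ_{n+1}|` and `f(λ)` there is a constant `C = C(ε, K₀, B)` such that for every index
`1 ≤ r ≤ n`:
`∑_{i ≤ n} f_i|λ_i| ≤ ε ∑_{i ≠ r, i ≤ n} f_i λ_i² + C (1 + ∑_{i ≤ n} f_i + f_τ)`. -/
theorem stmt5 (n : ℕ) (Γ : Set (Fin (n + 1) → ℝ)) (f : (Fin (n + 1) → ℝ) → ℝ)
    (hopen : IsOpen Γ) (hconv : Convex ℝ Γ)
    (hcone : ∀ t : ℝ, 0 < t → ∀ lam ∈ Γ, t • lam ∈ Γ)
    (hone : (fun _ : Fin (n + 1) => (1 : ℝ)) ∈ Γ)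
    (hdiff : ∀ lam ∈ Γ, DifferentiableAt ℝ f lam)
    (hconc : ConcaveOn ℝ Γ f)
    (hmono : ∀ lam ∈ Γ, ∀ ℓ, 0 < fderiv ℝ f lam (Pi.single ℓ 1))
    (hf1 : 0 < f (fun _ => (1 : ℝ)))
    (K₀ : ℝ) (hK₀ : 0 ≤ K₀)
    (hK : ∀ lam ∈ Γ, -K₀ * (1 + ∑ ℓ, fderiv ℝ f lam (Pi.single ℓ 1)) ≤
      ∑ ℓ, fderiv ℝ f lam (Pi.single ℓ 1) * lam ℓ)
    (ε B : ℝ) (hε : 0 < ε) (hB : 0 ≤ B) :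
    ∃ C : ℝ, 0 < C ∧ ∀ lam ∈ Γ, |lam (Fin.last n)| ≤ B → f lam ≤ B → ∀ r : Fin n,
      ∑ i : Fin n, fderiv ℝ f lam (Pi.single i.castSucc 1) * |lam i.castSucc| ≤
        ε * ∑ i ∈ Finset.univ.filter (fun i : Fin n => i ≠ r),
            fderiv ℝ f lam (Pi.single i.castSucc 1) * lam i.castSucc ^ 2 +
          C * (1 + ∑ i : Fin n, fderiv ℝ f lam (Pi.single i.castSucc 1) +
            fderiv ℝ f lam (Pi.single (Fin.last n) 1)) :=
  stmt5_general n Γ f hone hdiff hconc hmono hf1 K₀ hK₀ hK ε B hε hB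
end
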